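/- Minimiser rigidity: suppose φ is sufficient for C given T and p(X|T) attains the minimum of I(X;T) − β·I(X;C) over IB-feasible encoders for some β ≥ 0. Then I_p(X;T|φ(T)) = 0; equivalently, p(x|t) depends on t only through φ(t) for p-almost every t. -/

import Mathlib

open scoped BigOperators

/-- Finite-alphabet mutual information of a joint distribution `p` on `A × B`. -/
noncomputable def mi {A B : Type*} [Fintype A] [Fintype B] (p : A → B → ℝ) : ℝ :=
  ∑ a, ∑ b, p a b * Real.log (p a b / ((∑ b', p a b') * (∑ a', p a' b)))

/-- Finite-alphabet conditional mutual information `I(A;B∣Z)` of a joint on `A × B × Z`. -/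
noncomputable def cmi {A B Z : Type*} [Fintype A] [Fintype B] [Fintype Z]
    (p : A → B → Z → ℝ) : ℝ :=
  ∑ z, ∑ a, ∑ b, p a b z *
    Real.log ((p a b z * (∑ a', ∑ b', p a' b' z)) /
      ((∑ b', p a b' z) * (∑ a', p a' b z)))

/-- `A` and `B` are conditionally independent given `Z` (Markov chain `A ↔ Z ↔ B`),
for a joint distribution `p` on `A × B × Z`. -/
def CondIndep {A B Z : Type*} [Fintype A] [Fintype B] (p : A → B → Z → ℝ) : Prop :=
  ∀ a b z, p a b z * (∑ a', ∑ b', p a' b' z) = (∑ b', p a b' z) * (∑ a', p a' b z)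

/-- A stochastic kernel (each row nonnegative and summing to one). -/
def IsKernel {A B : Type*} [Fintype B] (q : A → B → ℝ) : Prop :=
  (∀ a b, 0 ≤ q a b) ∧ ∀ a, ∑ b, q a b = 1

/-- The IB Lagrangian `I(X;T) − β·I(X;C)` of an encoder `e = p(X∣T)` for the joint
`p` on `T × C`, computed under the induced joint `p(t,c)·e(x∣t)`. -/
noncomputable def fullLag {T C X : Type*} [Fintype T] [Fintype C] [Fintype X]
    (p : T → C → ℝ) (β : ℝ) (e : T → X → ℝ) : ℝ :=
  mi (fun t x => (∑ c, p t c) * e t x) - β * mi (fun c x => ∑ t, p t c * e t x)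

/-- The pushforward joint of `(φ(T), C)`. -/
noncomputable def pushJoint {T C Z : Type*} [Fintype T] [DecidableEq Z]
    (p : T → C → ℝ) (φ : T → Z) (z : Z) (c : C) : ℝ :=
  ∑ t, if φ t = z then p t c else 0

/-!
Replace the encoder `e` by its `p(t)`-weighted average over each fibre of `φ`. Sufficiency
says `p(c ∣ t)` depends only on `φ(t)`, so the `(C, X)` joint, and with it `I(X;C)`, does not
change, while `I(X;T)` drops to `I(X;φ(T))` because the averaged encoder makes `X ⟂ T ∣ φ(T)`.
By the chain rule `I(X;T) = I(X;T ∣ φ(T)) + I(X;φ(T))`, optimality of `e` then forces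
`I(X;T ∣ φ(T)) ≤ 0`, and conditional mutual information is nonnegative.
-/

open Finset Real

lemma sub_le_mul_log_div {a b : ℝ} (ha : 0 ≤ a) (hb : 0 ≤ b) (hab : a ≠ 0 → b ≠ 0) :
    a - b ≤ a * log (a / b) := by
  rcases ha.eq_or_lt with rfl | ha
  · simpa using hb
  have hb : 0 < b := hb.lt_of_ne' (hab ha.ne')
  have h := one_sub_inv_le_log_of_pos (div_pos ha hb)
  rw [inv_div] at h
  calc a - b = a * (1 - b / a) := by field_simp
    _ ≤ a * log (a / b) := mul_le_mul_of_nonneg_left h ha.le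

lemma sum_mul_log_div_nonneg {ι : Type*} [Fintype ι] {a b : ι → ℝ} (ha : ∀ i, 0 ≤ a i)
    (hb : ∀ i, 0 ≤ b i) (hab : ∀ i, a i ≠ 0 → b i ≠ 0) (hsum : ∑ i, b i ≤ ∑ i, a i) :
    0 ≤ ∑ i, a i * log (a i / b i) :=
  calc 0 ≤ ∑ i, (a i - b i) := by rw [sum_sub_distrib]; linarith
    _ ≤ _ := sum_le_sum fun i _ => sub_le_mul_log_div (ha i) (hb i) (hab i)

lemma cmi_nonneg {A B Z : Type*} [Fintype A] [Fintype B] [Fintype Z] {p : A → B → Z → ℝ}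
    (hp : ∀ a b z, 0 ≤ p a b z) : 0 ≤ cmi p := by
  refine sum_nonneg fun z _ => ?_
  set S := ∑ a', ∑ b', p a' b' z
  have hS : 0 ≤ S := sum_nonneg fun a _ => sum_nonneg fun b _ => hp a b z
  rcases hS.eq_or_lt with hS | hS
  · have hzero : ∀ a b, p a b z = 0 := fun a b =>
      (sum_eq_zero_iff_of_nonneg fun b _ => hp a b z).mp
        ((sum_eq_zero_iff_of_nonneg fun a _ => sum_nonneg fun b _ => hp a b z).mp hS.symm a
          (mem_univ a)) b (mem_univ b)
    simp [hzero]
  have hrow : ∀ a, 0 ≤ ∑ b', p a b' z := fun a => sum_nonneg fun b _ => hp a b z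
  have hcol : ∀ b, 0 ≤ ∑ a', p a' b z := fun b => sum_nonneg fun a _ => hp a b z
  -- Gibbs' inequality against the product of the two marginals, rescaled to total mass `S`
  have key := sum_mul_log_div_nonneg (ι := A × B) (a := fun i => p i.1 i.2 z)
    (b := fun i => (∑ b', p i.1 b' z) * (∑ a', p a' i.2 z) / S) (fun i => hp _ _ z)
    (fun i => by have := hrow i.1; have := hcol i.2; positivity) (fun i hi => ?_) ?_
  · simpa only [Fintype.sum_prod_type, div_div_eq_mul_div] using key
  · have hpos : 0 < p i.1 i.2 z := (hp _ _ z).lt_of_ne' hi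
    have := (single_le_sum (fun b _ => hp i.1 b z) (mem_univ i.2)).trans_lt' hpos
    have := (single_le_sum (fun a _ => hp a i.2 z) (mem_univ i.1)).trans_lt' hpos
    positivity
  · have hcolsum : ∑ b, ∑ a', p a' b z = S := sum_comm
    refine le_of_eq ?_
    calc ∑ i : A × B, (∑ b', p i.1 b' z) * (∑ a', p a' i.2 z) / S
        = (∑ a, ∑ b', p a b' z) * (∑ b, ∑ a', p a' b z) / S := by
          rw [Fintype.sum_prod_type, sum_mul_sum, sum_div]; simp only [sum_div]
      _ = ∑ i : A × B, p i.1 i.2 z := by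
          rw [hcolsum, Fintype.sum_prod_type, mul_div_assoc, div_self hS.ne', mul_one]

section Pushforward

variable {T Z X : Type*} [Fintype T] [DecidableEq Z] (φ : T → Z)

lemma sum_sum_ite_fiber [Fintype Z] (F : T → ℝ) :
    ∑ z, ∑ t, (if φ t = z then F t else 0) = ∑ t, F t := by
  rw [sum_comm]; simp

lemma pushJoint_nonneg {C : Type*} {p : T → C → ℝ} (hp : ∀ t c, 0 ≤ p t c) (z : Z) (c : C) :
    0 ≤ pushJoint p φ z c :=
  sum_nonneg fun t _ => by split_ifs <;> simp [hp]

lemma le_pushJoint {C : Type*} {p : T → C → ℝ} (hp : ∀ t c, 0 ≤ p t c) (t : T) (c : C) :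
    p t c ≤ pushJoint p φ (φ t) c := by
  have := single_le_sum (f := fun t' => if φ t' = φ t then p t' c else 0)
    (fun t' _ => by split_ifs <;> simp [hp]) (mem_univ t)
  simpa [pushJoint] using this

lemma sum_pushJoint [Fintype Z] (f : T → X → ℝ) (x : X) :
    ∑ z, pushJoint f φ z x = ∑ t, f t x :=
  sum_sum_ite_fiber φ (f · x)

lemma sum_pushJoint_mul [Fintype Z] [Fintype X] (f : T → X → ℝ) (H : Z → X → ℝ) :
    ∑ z, ∑ x, pushJoint f φ z x * H z x = ∑ t, ∑ x, f t x * H (φ t) x := by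
  rw [← sum_sum_ite_fiber φ (fun t => ∑ x, f t x * H (φ t) x)]
  refine sum_congr rfl fun z _ => ?_
  simp only [pushJoint, sum_mul, ite_mul, zero_mul]
  rw [sum_comm]
  exact sum_congr rfl fun t _ => by split_ifs with h <;> simp [h]

lemma cmi_fiber_eq [Fintype Z] [Fintype X] (f : T → X → ℝ) :
    cmi (fun x t z => if φ t = z then f t x else 0) =
      ∑ t, ∑ x, f t x * log (f t x * (∑ x', pushJoint f φ (φ t) x') /
        (pushJoint f φ (φ t) x * ∑ x', f t x')) := by
  rw [cmi, ← sum_sum_ite_fiber φ]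
  refine sum_congr rfl fun z _ => ?_
  rw [sum_comm]
  refine sum_congr rfl fun t _ => ?_
  split_ifs with h
  · subst h; simp [pushJoint]
  · simp

lemma mi_pushJoint_eq [Fintype Z] [Fintype X] (f : T → X → ℝ) :
    mi (pushJoint f φ) = ∑ t, ∑ x, f t x * log (pushJoint f φ (φ t) x /
      ((∑ x', pushJoint f φ (φ t) x') * ∑ t', f t' x)) := by
  simp only [mi, sum_pushJoint]
  exact sum_pushJoint_mul φ f _

lemma mi_eq_cmi_add_mi_pushJoint [Fintype Z] [Fintype X] (f : T → X → ℝ)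
    (hf : ∀ t x, 0 ≤ f t x) :
    mi f = cmi (fun x t z => if φ t = z then f t x else 0) + mi (pushJoint f φ) := by
  rw [cmi_fiber_eq, mi_pushJoint_eq, ← sum_add_distrib, mi]
  refine sum_congr rfl fun t _ => ?_
  rw [← sum_add_distrib]
  refine sum_congr rfl fun x _ => ?_
  rcases (hf t x).eq_or_lt with h | h
  · simp [← h]
  have hG := le_pushJoint φ hf t x
  have hQ := single_le_sum (fun x' _ => pushJoint_nonneg φ hf (φ t) x') (mem_univ x)
  have hrow := single_le_sum (fun x' _ => hf t x') (mem_univ x)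
  have hcol := single_le_sum (fun t' _ => hf t' x) (mem_univ t)
  have : 0 < pushJoint f φ (φ t) x := h.trans_le hG
  have : 0 < ∑ x', pushJoint f φ (φ t) x' := this.trans_le hQ
  have : 0 < ∑ x', f t x' := h.trans_le hrow
  have : 0 < ∑ t', f t' x := h.trans_le hcol
  rw [← mul_add, ← log_mul (by positivity) (by positivity)]
  congr 2
  field_simp

end Pushforward

section FiberAverage

variable {T Z X : Type*} [Fintype T] [DecidableEq Z] (φ : T → Z)

noncomputable def fiberMass (w : T → ℝ) (z : Z) : ℝ := ∑ t, if φ t = z then w t else 0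

lemma eq_zero_of_fiberMass_eq_zero {w : T → ℝ} (hw : ∀ t, 0 ≤ w t) {t : T}
    (h : fiberMass φ w (φ t) = 0) : w t = 0 := by
  have := (sum_eq_zero_iff_of_nonneg fun t' _ => by split_ifs <;> simp [hw]).mp h t (mem_univ t)
  simpa using this

lemma sum_pushJoint_eq_fiberMass [Fintype X] (f : T → X → ℝ) (z : Z) :
    ∑ x, pushJoint f φ z x = fiberMass φ (fun t => ∑ x, f t x) z := by
  unfold pushJoint fiberMass
  rw [sum_comm]
  exact sum_congr rfl fun t _ => by split_ifs <;> simp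

lemma pushJoint_eq_of_eq_mul_comp {f : T → X → ℝ} {r : T → ℝ} {k : Z → X → ℝ}
    (hf : ∀ t x, f t x = r t * k (φ t) x) (z : Z) (x : X) :
    pushJoint f φ z x = fiberMass φ r z * k z x := by
  rw [pushJoint, fiberMass, sum_mul]
  exact sum_congr rfl fun t _ => by split_ifs with h <;> simp [h, hf]

lemma cmi_fiber_eq_zero_of_eq_mul_comp [Fintype Z] [Fintype X] {f : T → X → ℝ} {r : T → ℝ}
    {k : Z → X → ℝ} (hf : ∀ t x, f t x = r t * k (φ t) x) :
    cmi (fun x t z => if φ t = z then f t x else 0) = 0 := by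
  have log_div_self : ∀ y : ℝ, log (y / y) = 0 := fun y => by
    rcases eq_or_ne y 0 with rfl | hy <;> simp [*]
  rw [cmi_fiber_eq]
  refine sum_eq_zero fun t _ => sum_eq_zero fun x _ => ?_
  simp only [pushJoint_eq_of_eq_mul_comp φ hf, hf, ← mul_sum]
  convert mul_zero _ using 2
  convert log_div_self (r t * k (φ t) x * (fiberMass φ r (φ t) * ∑ x', k (φ t) x')) using 2
  ring

-- On a `w`-null fibre any kernel would do; `e` itself is kept.
noncomputable def fiberAverage (w : T → ℝ) (e : T → X → ℝ) (t : T) (x : X) : ℝ :=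
  if fiberMass φ w (φ t) = 0 then e t x
  else pushJoint (fun t x => w t * e t x) φ (φ t) x / fiberMass φ w (φ t)

variable {φ} {w : T → ℝ} {e : T → X → ℝ}

lemma isKernel_fiberAverage [Fintype X] (hw : ∀ t, 0 ≤ w t) (he : IsKernel e) :
    IsKernel (fiberAverage φ w e) := by
  have hwe : ∀ t x, 0 ≤ w t * e t x := fun t x => mul_nonneg (hw t) (he.1 t x)
  refine ⟨fun t x => ?_, fun t => ?_⟩ <;> unfold fiberAverage <;> split_ifs with h
  · exact he.1 t x
  · exact div_nonneg (pushJoint_nonneg φ hwe _ _) (sum_nonneg fun t' _ => by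
      split_ifs <;> simp [hw])
  · exact he.2 t
  · rw [← sum_div, sum_pushJoint_eq_fiberMass, div_eq_one_iff_eq h]
    simp [← mul_sum, he.2]

lemma mul_fiberAverage (hw : ∀ t, 0 ≤ w t) (t : T) (x : X) :
    w t * fiberAverage φ w e t x =
      w t * (pushJoint (fun t x => w t * e t x) φ (φ t) x / fiberMass φ w (φ t)) := by
  unfold fiberAverage
  split_ifs with h
  · simp [eq_zero_of_fiberMass_eq_zero φ hw h]
  · rfl

lemma pushJoint_mul_fiberAverage (hw : ∀ t, 0 ≤ w t) :
    pushJoint (fun t x => w t * fiberAverage φ w e t x) φ =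
      pushJoint (fun t x => w t * e t x) φ := by
  ext z x
  rw [pushJoint_eq_of_eq_mul_comp φ (r := w)
    (k := fun z x => pushJoint (fun t x => w t * e t x) φ z x / fiberMass φ w z)
    (mul_fiberAverage hw)]
  rcases eq_or_ne (fiberMass φ w z) 0 with h | h
  · rw [h, zero_mul, eq_comm, pushJoint]
    refine sum_eq_zero fun t _ => ?_
    split_ifs with ht
    · subst ht; simp [eq_zero_of_fiberMass_eq_zero φ hw h]
    · rfl
  · exact mul_div_cancel₀ _ h

end FiberAverage

section Sufficiency

variable {T C Z X : Type*} [Fintype T] [DecidableEq Z] {φ : T → Z} {p : T → C → ℝ}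

lemma eq_mul_pushJoint_div_of_condIndep [Fintype C] (hp : ∀ t c, 0 ≤ p t c)
    (hsuff : CondIndep (fun c t z => if φ t = z then p t c else 0)) (t : T) (c : C) :
    p t c = (∑ c', p t c') *
      (pushJoint p φ (φ t) c / fiberMass φ (fun t => ∑ c', p t c') (φ t)) := by
  have h := hsuff c t (φ t)
  simp only [↓reduceIte] at h
  change p t c * ∑ c', pushJoint p φ (φ t) c' = pushJoint p φ (φ t) c * _ at h
  rw [sum_pushJoint_eq_fiberMass] at h
  rcases eq_or_ne (fiberMass φ (fun t => ∑ c', p t c') (φ t)) 0 with hM | hM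
  · have hw := eq_zero_of_fiberMass_eq_zero φ (fun t => sum_nonneg fun c _ => hp t c) hM
    have hpc := single_le_sum (fun c' _ => hp t c') (mem_univ c)
    rw [hw, zero_mul]
    linarith [hp t c]
  · rw [mul_div_assoc', eq_div_iff hM, h, mul_comm]

lemma sum_mul_eq_sum_mul_pushJoint [Fintype Z] {w : T → ℝ} {q : Z → C → ℝ}
    (hq : ∀ t c, p t c = w t * q (φ t) c) (g : T → X → ℝ) (c : C) (x : X) :
    ∑ t, p t c * g t x = ∑ z, q z c * pushJoint (fun t x => w t * g t x) φ z x := by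
  rw [← sum_sum_ite_fiber φ]
  refine sum_congr rfl fun z _ => ?_
  rw [pushJoint, mul_sum]
  refine sum_congr rfl fun t _ => ?_
  split_ifs with h
  · rw [hq, h]; ring
  · simp

end Sufficiency

theorem stmt12_general {T C Z X : Type*} [Fintype T] [Fintype C] [Fintype Z] [DecidableEq Z]
    [Fintype X]
    (φ : T → Z) (p : T → C → ℝ) (β : ℝ)
    (hpos : ∀ t c, 0 ≤ p t c)
    (hsuff : CondIndep (fun c t z => if φ t = z then p t c else 0))
    (e : T → X → ℝ) (he : IsKernel e)
    (hopt : ∀ e' : T → X → ℝ, IsKernel e' → fullLag p β e ≤ fullLag p β e') :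
    cmi (fun x t z => if φ t = z then (∑ c, p t c) * e t x else 0) = 0 := by
  set w : T → ℝ := fun t => ∑ c, p t c
  have hw : ∀ t, 0 ≤ w t := fun t => sum_nonneg fun c _ => hpos t c
  have hwe : ∀ t x, 0 ≤ w t * e t x := fun t x => mul_nonneg (hw t) (he.1 t x)
  set e' := fiberAverage φ w e
  set k : Z → X → ℝ := fun z x => pushJoint (fun t x => w t * e t x) φ z x / fiberMass φ w z
  have hpush := pushJoint_mul_fiberAverage (φ := φ) (e := e) hw
  -- by sufficiency, the `(C, X)` joint only sees the `(φ(T), X)` joint, which `e'` preserves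
  have hCX : (fun c x => ∑ t, p t c * e' t x) = fun c x => ∑ t, p t c * e t x := by
    ext c x
    set q : Z → C → ℝ := fun z c => pushJoint p φ z c / fiberMass φ w z
    have hfactor : ∀ t c, p t c = w t * q (φ t) c := eq_mul_pushJoint_div_of_condIndep hpos hsuff
    rw [sum_mul_eq_sum_mul_pushJoint hfactor, sum_mul_eq_sum_mul_pushJoint hfactor, hpush]
  have hle : mi (fun t x => w t * e t x) ≤ mi (fun t x => w t * e' t x) := by
    have := hopt e' (isKernel_fiberAverage hw he)
    rw [fullLag, fullLag, hCX] at this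
    linarith
  have he'_nonneg : ∀ t x, 0 ≤ w t * e' t x := fun t x =>
    mul_nonneg (hw t) ((isKernel_fiberAverage hw he).1 t x)
  have hmi' : mi (fun t x => w t * e' t x) = mi (pushJoint (fun t x => w t * e t x) φ) := by
    rw [mi_eq_cmi_add_mi_pushJoint φ _ he'_nonneg, hpush,
      cmi_fiber_eq_zero_of_eq_mul_comp φ (r := w) (k := k) (mul_fiberAverage hw), zero_add]
  have hchain := mi_eq_cmi_add_mi_pushJoint φ _ hwe
  linarith [cmi_nonneg (p := fun x t z => if φ t = z then w t * e t x else 0)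
    fun x t z => by split_ifs <;> simp [hwe]]

/-- Minimiser rigidity: if `φ` is sufficient for `C` given `T`
and the encoder `e` attains the minimum of `I(X;T) − β·I(X;C)` over IB-feasible
encoders for some `β ≥ 0`, then `I(X;T ∣ φ(T)) = 0`, i.e. `p(x∣t)` depends on `t`
only through `φ(t)` almost everywhere. -/
theorem stmt12 {T C Z X : Type*} [Fintype T] [Fintype C] [Fintype Z] [DecidableEq Z]
    [Fintype X] [Nonempty X]
    (φ : T → Z) (p : T → C → ℝ) (β : ℝ) (hβ : 0 ≤ β)
    (hpos : ∀ t c, 0 ≤ p t c)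
    (hsum : ∑ t, ∑ c, p t c = 1)
    (hsuff : CondIndep (fun c t z => if φ t = z then p t c else 0))
    (e : T → X → ℝ) (he : IsKernel e)
    (hopt : ∀ e' : T → X → ℝ, IsKernel e' → fullLag p β e ≤ fullLag p β e') :
    cmi (fun x t z => if φ t = z then (∑ c, p t c) * e t x else 0) = 0 :=
  stmt12_general φ p β hpos hsuff e he hopt
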